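/- Suppose H is a BSHM(n,ℓ,a,b) with respect to H₁, where 2 < ℓ < n−2 and the values a and b are both attained. Then ℓ ≡ a ≡ b (mod 4). -/

import Mathlib

/-!
For `±1` numbers `x, y, z` one has `xy + yz + zx ≡ 3 (mod 4)`, so for any three columns of `H₁`
the three dot products sum to `3ℓ` modulo `4`. If `a ≡ b` this gives `3a ≡ 3ℓ`, i.e. `a ≡ ℓ`.
Otherwise, for a suitable labelling `{w, c} = {a, b}` the triangle types `(w, w, c)` and
`(c, c, c)` cannot occur, so the columns split into two classes with dot product `w` inside a
class and `c` across. For two columns `j, k` of one class, `e_j - e_k` is an eigenvector of the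
Gram matrix `G = H₁ᵀH₁`; as `G² = nG`, its eigenvalue `ℓ - w` is `0` or `n`. Hence the columns
of a class agree on all rows of `H₁` or on all rows of `H₂`, and then three of those rows (each
taking one value per class) cannot be pairwise orthogonal.
-/

open Matrix

/-- A Hadamard matrix of order `n`: entries in `{1,-1}` and `Hᵀ * H = n • 1`. -/
def IsHadamard {n : ℕ} (H : Matrix (Fin n) (Fin n) ℤ) : Prop :=
  (∀ i j, H i j = 1 ∨ H i j = -1) ∧ Hᵀ * H = (n : ℤ) • 1

/-- Dot product of columns `j` and `k` of the submatrix of `H` formed by the rows in `R`. -/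
def colDot {n : ℕ} (H : Matrix (Fin n) (Fin n) ℤ) (R : Finset (Fin n)) (j k : Fin n) : ℤ :=
  ∑ i ∈ R, H i j * H i k

/-- `H` is a balanced splittable Hadamard matrix with respect to the submatrix formed by the
rows in `R`, with values `a, b`. -/
def IsBSHM {n : ℕ} (H : Matrix (Fin n) (Fin n) ℤ) (R : Finset (Fin n)) (a b : ℤ) : Prop :=
  _root_.IsHadamard H ∧ ∀ j k : Fin n, j ≠ k → colDot H R j k = a ∨ colDot H R j k = b

set_option synthInstance.maxSize 1000 in
lemma zmod_four_triangle_parity {W C L x y z : ZMod 4} (hW : 2 * W + C ≠ 3 * L)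
    (hC : 3 * C ≠ 3 * L) (hx : x = W ∨ x = C) (hy : y = W ∨ y = C) (hz : z = W ∨ z = C)
    (h : x + y + z = 3 * L) : (x = C ↔ ¬(z = C ↔ y = C)) := by
  have key : ∀ W C L : ZMod 4, 2 * W + C ≠ 3 * L → 3 * C ≠ 3 * L → ∀ x y z : ZMod 4,
      x = W ∨ x = C → y = W ∨ y = C → z = W ∨ z = C → x + y + z = 3 * L →
        (x = C ↔ ¬(z = C ↔ y = C)) := by
    decide
  exact key W C L hW hC x y z hx hy hz h

lemma zmod_four_forbidden_triangles {A B L : ZMod 4} (h : A ≠ B) :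
    (2 * A + B ≠ 3 * L ∧ 3 * B ≠ 3 * L) ∨ (2 * B + A ≠ 3 * L ∧ 3 * A ≠ 3 * L) := by
  revert A B L; decide

lemma zmod_four_eq_of_three_mul_eq {A L : ZMod 4} (h : 3 * A = 3 * L) : A = L := by
  revert A L; decide

lemma iff_not_iff_of_triangle {α : Type*} {E : α → α → Prop} (hsymm : ∀ j k, E j k → E k j)
    (hirr : ∀ j, ¬E j j)
    (htri : ∀ j k m, j ≠ k → j ≠ m → k ≠ m → (E j k ↔ ¬(E j m ↔ E k m)))
    (p : α) {j k : α} (hjk : j ≠ k) : E j k ↔ ¬(E j p ↔ E k p) := by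
  by_cases hj : j = p
  · subst hj
    have := hirr j
    have := @hsymm j k
    have := @hsymm k j
    tauto
  by_cases hk : k = p
  · subst hk
    have := hirr k
    tauto
  exact htri j k p hjk hj hk

lemma eq_zero_or_eq_of_mul_self_eq_smul {ι R : Type*} [Fintype ι] [CommRing R] [IsDomain R]
    {G : Matrix ι ι R} {c μ : R} {v : ι → R} (hG : G * G = c • G) (hv : G *ᵥ v = μ • v)
    (hv0 : v ≠ 0) : μ = 0 ∨ μ = c := by
  have : (μ * μ) • v = (c * μ) • v := by
    calc (μ * μ) • v = G *ᵥ (G *ᵥ v) := by rw [hv, mulVec_smul, hv, smul_smul]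
      _ = c • (G *ᵥ v) := by rw [mulVec_mulVec, hG, smul_mulVec]
      _ = (c * μ) • v := by rw [hv, smul_smul]
  exact (mul_eq_mul_right_iff.mp (smul_left_injective R hv0 this)).symm

lemma not_forall_mul_eq_neg_one {α R : Type*} [CommRing R] [LinearOrder R]
    [IsStrictOrderedRing R] {S : Finset α} (hS : 3 ≤ S.card) (z : α → R) :
    ¬∀ i ∈ S, ∀ i' ∈ S, i ≠ i' → z i * z i' = -1 := by
  intro h
  obtain ⟨i₁, i₂, i₃, h₁, h₂, h₃, h₁₂, h₁₃, h₂₃⟩ := Finset.two_lt_card_iff.mp hS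
  have hsq : (z i₁ * z i₂ * z i₃) ^ 2 = -1 := by
    rw [show (z i₁ * z i₂ * z i₃) ^ 2 = z i₁ * z i₂ * (z i₁ * z i₃) * (z i₂ * z i₃) by ring,
      h i₁ h₁ i₂ h₂ h₁₂, h i₁ h₁ i₃ h₃ h₁₃, h i₂ h₂ i₃ h₃ h₂₃]
    norm_num
  linarith [sq_nonneg (z i₁ * z i₂ * z i₃)]

namespace IsHadamard

variable {n : ℕ} {H : Matrix (Fin n) (Fin n) ℤ}

lemma matrix_isHadamard (hH : _root_.IsHadamard H) : H.IsHadamard := by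
  obtain rfl | hn := eq_or_ne n 0
  · exact ⟨fun i => i.elim0, by ext i; exact i.elim0, by ext i; exact i.elim0⟩
  have hT : Hᵀ.IsHadamard := by
    refine .of_mul_conjTranspose (fun i j => ?_) ?_ (IsRegular.of_ne_zero (by simpa using hn))
    · exact Unitary.mem_iff_eq_one_or_eq_neg_one.mpr (hH.1 j i)
    · simpa [conjTranspose_eq_transpose_of_trivial] using hH.2
  exact isHadamard_transpose_iff.mp hT

lemma mul_transpose (hH : _root_.IsHadamard H) : H * Hᵀ = (n : ℤ) • 1 := by
  simpa [conjTranspose_eq_transpose_of_trivial] using hH.matrix_isHadamard.mul_conjTranspose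

end IsHadamard

section ColDot

variable {n : ℕ} {H : Matrix (Fin n) (Fin n) ℤ}

lemma colDot_comm (R : Finset (Fin n)) (j k : Fin n) : colDot H R j k = colDot H R k j :=
  Finset.sum_congr rfl fun _ _ => mul_comm _ _

lemma colDot_self (hpm : ∀ i j, H i j = 1 ∨ H i j = -1) (R : Finset (Fin n)) (j : Fin n) :
    colDot H R j j = R.card := by
  simp [colDot, Int.isUnit_mul_self (Int.isUnit_iff.mpr (hpm _ j))]

lemma colDot_compl (hH : _root_.IsHadamard H) (R : Finset (Fin n)) {j k : Fin n} (hjk : j ≠ k) :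
    colDot H Rᶜ j k = -colDot H R j k := by
  have h := congrFun (congrFun hH.2 j) k
  simp only [mul_apply, transpose_apply, Matrix.smul_apply, one_apply_ne hjk, smul_zero] at h
  rw [← Finset.sum_add_sum_compl R] at h
  rw [colDot, colDot]
  linarith

lemma eq_of_colDot_eq_card (hpm : ∀ i j, H i j = 1 ∨ H i j = -1) {S : Finset (Fin n)}
    {j k : Fin n} (h : colDot H S j k = S.card) : ∀ i ∈ S, H i j = H i k := by
  have hle : ∀ i ∈ S, H i j * H i k ≤ 1 := fun i _ => by
    rcases hpm i j with h1 | h1 <;> rcases hpm i k with h2 | h2 <;> simp [h1, h2]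
  have hone := (Finset.sum_eq_sum_iff_of_le hle).mp (by simpa [colDot] using h)
  intro i hi
  have := hone i hi
  rcases hpm i j with h1 | h1 <;> rcases hpm i k with h2 | h2 <;> simp_all

/-- Each row contributes `xy + yz + xz ∈ {3, -1}`, where `x, y, z = ±1`. -/
lemma colDot_triangle_mod_four (hpm : ∀ i j, H i j = 1 ∨ H i j = -1) (R : Finset (Fin n))
    (j k m : Fin n) :
    (colDot H R j k : ZMod 4) + colDot H R k m + colDot H R j m = 3 * R.card := by
  have hrow : ∀ i, (H i j * H i k + H i k * H i m + H i j * H i m : ZMod 4) = 3 := fun i => by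
    rcases hpm i j with h1 | h1 <;> rcases hpm i k with h2 | h2 <;>
      rcases hpm i m with h3 | h3 <;> simp [h1, h2, h3] <;> decide
  simp only [colDot, Int.cast_sum, Int.cast_mul, ← Finset.sum_add_distrib, hrow,
    Finset.sum_const, nsmul_eq_mul, mul_comm]

lemma of_colDot_eq (R : Finset (Fin n)) :
    of (colDot H R) = Hᵀ * diagonal (fun i => if i ∈ R then 1 else 0) * H := by
  ext j k
  simp [colDot, mul_apply, diagonal, Finset.sum_ite_mem]

lemma of_colDot_mul_self (hHt : H * Hᵀ = (n : ℤ) • 1) (R : Finset (Fin n)) :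
    of (colDot H R) * of (colDot H R) = (n : ℤ) • of (colDot H R) := by
  rw [of_colDot_eq]
  set D : Matrix (Fin n) (Fin n) ℤ := diagonal fun i => if i ∈ R then 1 else 0
  have hD : D * D = D := by simp [D, diagonal_mul_diagonal]
  calc Hᵀ * D * H * (Hᵀ * D * H) = Hᵀ * D * (H * Hᵀ) * D * H := by simp only [Matrix.mul_assoc]
    _ = (n : ℤ) • (Hᵀ * D * H) := by
        rw [hHt, Matrix.mul_smul, Matrix.mul_one, Matrix.smul_mul, Matrix.smul_mul,
          Matrix.mul_assoc Hᵀ D D, hD]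

/-- `e_j - e_k` is an eigenvector of the Gram matrix `colDot H R`, with eigenvalue
`R.card - colDot H R j k`. -/
lemma colDot_eq_card_or_eq_card_sub (hH : _root_.IsHadamard H) {R : Finset (Fin n)}
    {j k : Fin n} (hjk : j ≠ k) (hsame : ∀ m, m ≠ j → m ≠ k → colDot H R j m = colDot H R k m) :
    colDot H R j k = R.card ∨ colDot H R j k = R.card - n := by
  set v : Fin n → ℤ := Pi.single j 1 - Pi.single k 1
  have hv0 : v ≠ 0 := fun h => by simpa [v, hjk] using congrFun h j
  have hv : of (colDot H R) *ᵥ v = (R.card - colDot H R j k) • v := by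
    ext m
    simp only [v, mulVec_sub, mulVec_single_one, Pi.sub_apply, col_apply, of_apply,
      Pi.smul_apply, smul_eq_mul]
    by_cases hmj : m = j
    · subst hmj
      simp [colDot_self hH.1, hjk]
    by_cases hmk : m = k
    · subst hmk
      simp [colDot_self hH.1, hmj, colDot_comm R m j]
    simp [hmj, hmk, colDot_comm R m, hsame m hmj hmk]
  rcases eq_zero_or_eq_of_mul_self_eq_smul (of_colDot_mul_self hH.mul_transpose R) hv hv0 with
    h | h
  · left; linarith
  · right; linarith

lemma false_of_const_on_two_classes (hH : _root_.IsHadamard H) {S : Finset (Fin n)}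
    (hS : 3 ≤ S.card) (P : Fin n → Prop) {p q : Fin n} (hp : ¬P p) (hq : P q)
    (hconst : ∀ j k, (P j ↔ P k) → ∀ i ∈ S, H i j = H i k) : False := by
  classical
  have hunit : ∀ i j, IsUnit (H i j) := fun i j => Int.isUnit_iff.mpr (hH.1 i j)
  -- Orthogonality of two rows of `S` reads `#P • y + #Pᶜ • x = 0` with `x, y = ±1`.
  have hopp : ∀ i ∈ S, ∀ i' ∈ S, i ≠ i' → H i p * H i' p = -(H i q * H i' q) := by
    intro i hi i' hi' hii'
    have h := congrFun (congrFun hH.mul_transpose i) i'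
    simp only [mul_apply, transpose_apply, Matrix.smul_apply, one_apply_ne hii', smul_zero] at h
    have hsplit : ∑ m, H i m * H i' m
        = ∑ m, if P m then H i q * H i' q else H i p * H i' p := by
      refine Finset.sum_congr rfl fun m _ => ?_
      split_ifs with hm
      · rw [hconst m q (iff_of_true hm hq) i hi, hconst m q (iff_of_true hm hq) i' hi']
      · rw [hconst m p (iff_of_false hm hp) i hi, hconst m p (iff_of_false hm hp) i' hi']
    rw [hsplit, Finset.sum_ite, Finset.sum_const, Finset.sum_const, nsmul_eq_mul,
      nsmul_eq_mul] at h
    have hq' : 0 < (Finset.univ.filter P).card := Finset.card_pos.mpr ⟨q, by simpa using hq⟩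
    have hp' : 0 < (Finset.univ.filter (¬P ·)).card :=
      Finset.card_pos.mpr ⟨p, by simpa using hp⟩
    rcases Int.isUnit_iff.mp ((hunit i p).mul (hunit i' p)) with h1 | h1 <;>
      rcases Int.isUnit_iff.mp ((hunit i q).mul (hunit i' q)) with h2 | h2 <;>
      rw [h1, h2] at h ⊢ <;> omega
  refine not_forall_mul_eq_neg_one hS (fun i => H i p * H i q) fun i hi i' hi' hii' => ?_
  linear_combination (H i q * H i' q) * hopp i hi i' hi' hii'
    - H i' q * H i' q * Int.isUnit_mul_self (hunit i q) - Int.isUnit_mul_self (hunit i' q)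

end ColDot

namespace IsBSHM

variable {n : ℕ} {H : Matrix (Fin n) (Fin n) ℤ} {R : Finset (Fin n)} {w c : ℤ}

lemma symm (hB : IsBSHM H R w c) : IsBSHM H R c w :=
  ⟨hB.1, fun j k hjk => (hB.2 j k hjk).symm⟩

/-- The graph of pairs with dot product `c` has an even number of edges in every triangle, so it
is complete bipartite. -/
lemma exists_two_classes (hB : IsBSHM H R w c) (hwc : (w : ZMod 4) ≠ c)
    (hw : 2 * (w : ZMod 4) + c ≠ 3 * R.card) (hc : 3 * (c : ZMod 4) ≠ 3 * R.card)
    {p q : Fin n} (hcpq : colDot H R p q = c) :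
    ∃ P : Fin n → Prop, ¬P p ∧ P q ∧ ∀ j k, j ≠ k →
      ((P j ↔ P k) → colDot H R j k = w) ∧ (¬(P j ↔ P k) → colDot H R j k = c) := by
  set E : Fin n → Fin n → Prop := fun j k => (colDot H R j k : ZMod 4) = c
  have hval : ∀ j k, j ≠ k → (colDot H R j k : ZMod 4) = w ∨ (colDot H R j k : ZMod 4) = c :=
    fun j k hjk => (hB.2 j k hjk).imp (congrArg _) (congrArg _)
  have hirr : ∀ j, ¬E j j := fun j hj =>
    hc (by rw [← hj, colDot_self hB.1.1, Int.cast_natCast])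
  have hsymm : ∀ j k, E j k → E k j := fun j k => by simp only [E, colDot_comm R j k, imp_self]
  have htri : ∀ j k m, j ≠ k → j ≠ m → k ≠ m → (E j k ↔ ¬(E j m ↔ E k m)) :=
    fun j k m hjk hjm hkm => zmod_four_triangle_parity hw hc (hval j k hjk) (hval k m hkm)
      (hval j m hjm) (colDot_triangle_mod_four hB.1.1 R j k m)
  refine ⟨fun m => E m p, hirr p, hsymm p q (by simp [E, hcpq]), fun j k hjk => ?_⟩
  have hcut := iff_not_iff_of_triangle hsymm hirr htri p hjk
  refine ⟨fun h => (hB.2 j k hjk).resolve_right fun h' => ?_,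
    fun h => (hB.2 j k hjk).resolve_left fun h' => ?_⟩
  · exact hcut.mp (by simp [E, h']) h
  · exact hwc (h' ▸ hcut.mpr h)

lemma false_of_two_classes (hH : _root_.IsHadamard H) (hR : 3 ≤ R.card) (hRc : 3 ≤ Rᶜ.card)
    (P : Fin n → Prop) {p q : Fin n} (hp : ¬P p) (hq : P q)
    (hcls : ∀ j k, j ≠ k →
      ((P j ↔ P k) → colDot H R j k = w) ∧ (¬(P j ↔ P k) → colDot H R j k = c)) : False := by
  obtain ⟨j₀, k₀, hne, hjk₀⟩ : ∃ j k, j ≠ k ∧ (P j ↔ P k) := by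
    obtain ⟨r, -, hr⟩ := Finset.exists_mem_notMem_of_card_lt_card
      (((Finset.card_le_two (a := p) (b := q)).trans_lt hR).trans_le R.card_le_univ)
    obtain ⟨hrp, hrq⟩ : r ≠ p ∧ r ≠ q := by simpa using hr
    by_cases hr : P r
    · exact ⟨r, q, hrq, iff_of_true hr hq⟩
    · exact ⟨r, p, hrp, iff_of_false hr hp⟩
  have hsame : ∀ m, m ≠ j₀ → m ≠ k₀ → colDot H R j₀ m = colDot H R k₀ m := by
    intro m hmj hmk
    by_cases hm : P j₀ ↔ P m
    · rw [(hcls _ _ (Ne.symm hmj)).1 hm, (hcls _ _ (Ne.symm hmk)).1 (hjk₀.symm.trans hm)]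
    · rw [(hcls _ _ (Ne.symm hmj)).2 hm, (hcls _ _ (Ne.symm hmk)).2 fun h => hm (hjk₀.trans h)]
  obtain ⟨S, hS, hSclass⟩ : ∃ S : Finset (Fin n), 3 ≤ S.card ∧
      ∀ j k, j ≠ k → (P j ↔ P k) → colDot H S j k = S.card := by
    have hw : ∀ j k, j ≠ k → (P j ↔ P k) → colDot H R j k = colDot H R j₀ k₀ :=
      fun j k hjk hP => by rw [(hcls j k hjk).1 hP, (hcls _ _ hne).1 hjk₀]
    rcases colDot_eq_card_or_eq_card_sub hH hne hsame with h | h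
    · exact ⟨R, hR, fun j k hjk hP => (hw j k hjk hP).trans h⟩
    · refine ⟨Rᶜ, hRc, fun j k hjk hP => ?_⟩
      have hcard : (Rᶜ.card : ℤ) = n - R.card := by
        rw [Finset.card_compl, Fintype.card_fin,
          Nat.cast_sub (by simpa using R.card_le_univ)]
      rw [colDot_compl hH R hjk, hw j k hjk hP, h, hcard]
      ring
  exact false_of_const_on_two_classes hH hS P hp hq fun j k hP i hi => by
    obtain rfl | hjk := eq_or_ne j k
    · rfl
    · exact eq_of_colDot_eq_card hH.1 (hSclass j k hjk hP) i hi

lemma colDot_ne (hB : IsBSHM H R w c) (hR : 3 ≤ R.card) (hRc : 3 ≤ Rᶜ.card)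
    (hwc : (w : ZMod 4) ≠ c) (hw : 2 * (w : ZMod 4) + c ≠ 3 * R.card)
    (hc : 3 * (c : ZMod 4) ≠ 3 * R.card) (p q : Fin n) : colDot H R p q ≠ c := fun hcpq => by
  obtain ⟨P, hp, hq, hcls⟩ := hB.exists_two_classes hwc hw hc hcpq
  exact false_of_two_classes hB.1 hR hRc P hp hq hcls

lemma natCast_card_eq (hB : IsBSHM H R w c) (hwc : (w : ZMod 4) = c) (hn : 2 < n) :
    (R.card : ZMod 4) = w := by
  obtain ⟨j, k, m, hjk, hjm, hkm⟩ := (Fintype.two_lt_card_iff (α := Fin n)).mp (by simpa)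
  have hval : ∀ j k, j ≠ k → (colDot H R j k : ZMod 4) = w := fun j k hjk =>
    (hB.2 j k hjk).elim (congrArg _) fun h => h ▸ hwc.symm
  have htri := colDot_triangle_mod_four hB.1.1 R j k m
  rw [hval j k hjk, hval k m hkm, hval j m hjm] at htri
  exact (zmod_four_eq_of_three_mul_eq (by rw [← htri]; ring)).symm

end IsBSHM

theorem stmt12 {n ℓ : ℕ} (a b : ℤ) (H : Matrix (Fin n) (Fin n) ℤ)
    (R : Finset (Fin n)) (hRcard : R.card = ℓ) (h1 : 2 < ℓ) (h2 : ℓ < n - 2)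
    (hbshm : IsBSHM H R a b)
    (haAtt : ∃ j k, j ≠ k ∧ colDot H R j k = a)
    (hbAtt : ∃ j k, j ≠ k ∧ colDot H R j k = b) :
    Int.ModEq 4 (ℓ : ℤ) a ∧ Int.ModEq 4 a b := by
  subst hRcard
  suffices h : ((R.card : ℤ) : ZMod 4) = a ∧ (a : ZMod 4) = b from
    ⟨(ZMod.intCast_eq_intCast_iff _ _ 4).mp h.1, (ZMod.intCast_eq_intCast_iff _ _ 4).mp h.2⟩
  rw [Int.cast_natCast]
  by_cases hab : (a : ZMod 4) = b
  · exact ⟨hbshm.natCast_card_eq hab (by omega), hab⟩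
  have hR : 3 ≤ R.card := h1
  have hRc : 3 ≤ Rᶜ.card := by rw [Finset.card_compl, Fintype.card_fin]; omega
  obtain ⟨p, q, -, hpa⟩ := haAtt
  obtain ⟨p', q', -, hpb⟩ := hbAtt
  rcases zmod_four_forbidden_triangles (L := R.card) hab with ⟨hw, hc⟩ | ⟨hw, hc⟩
  · exact absurd hpb (hbshm.colDot_ne hR hRc hab hw hc p' q')
  · exact absurd hpa (hbshm.symm.colDot_ne hR hRc (Ne.symm hab) hw hc p q)
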